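/- Define B = {(x,y) ∈ ℝ² : there exists n ∈ ℤ with n·√3 < y ≤ (n + 1/2)·√3}. Then there are no three points X, Y, Z with dist(X,Y) = dist(Y,Z) = dist(Z,X) = 1 that all lie in B or all lie in ℝ² \ B. -/
import Mathlib

lemma allsmall (u v : ℝ) (hid : u^2 + u*v + v^2 = 3/4)
    (h1 : u^2 < 3/4) (h2 : v^2 < 3/4) (h3 : (u+v)^2 < 3/4) : False := by
  nlinarith [sq_nonneg (u+v), sq_nonneg (u-v), mul_self_nonneg (u*v), sq_nonneg u, sq_nonneg v]

lemma twobig1 (u v : ℝ) (hid : u^2 + u*v + v^2 = 3/4)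
    (h1 : 3/4 < u^2) (h2 : 3/4 < v^2) : False := by
  nlinarith [sq_nonneg (u+v)]

lemma twobig2 (u v : ℝ) (hid : u^2 + u*v + v^2 = 3/4)
    (h1 : 3/4 < u^2) (h2 : 3/4 < (u+v)^2) : False := by
  apply twobig1 u (-(u+v)) (by linarith [hid]) h1 (by nlinarith [h2])

lemma twobig3 (u v : ℝ) (hid : u^2 + u*v + v^2 = 3/4)
    (h1 : 3/4 < v^2) (h2 : 3/4 < (u+v)^2) : False := by
  apply twobig1 v (-(u+v)) (by linarith [hid]) h1 (by nlinarith [h2])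

lemma gap_lemma (s : ℝ) (hs2 : s^2 = 3) (hs0 : 0 < s) (m n : ℤ) (x y : ℝ)
    (hx1 : (m:ℝ)*s < x) (hy2 : y ≤ ((n:ℝ)+1/2)*s) (h : n + 1 ≤ m) :
    3/4 < (x - y)^2 := by
  have hmn : (n:ℝ) + 1 ≤ (m:ℝ) := by exact_mod_cast h
  have h1 : s/2 < x - y := by nlinarith
  nlinarith [h1, hs0, hs2]

lemma small_lemma (s : ℝ) (hs2 : s^2 = 3) (hs0 : 0 < s) (m n : ℤ) (x y : ℝ)
    (hx1 : (m:ℝ)*s < x) (hx2 : x ≤ ((m:ℝ)+1/2)*s)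
    (hy1 : (n:ℝ)*s < y) (hy2 : y ≤ ((n:ℝ)+1/2)*s) (h : m = n) :
    (x - y)^2 < 3/4 := by
  subst h
  nlinarith [hx1, hx2, hy1, hy2, hs0, hs2]

lemma stripdiff (s : ℝ) (hs2 : s^2 = 3) (hs1 : 1 < s) (m n : ℤ) (x y : ℝ)
    (hx1 : (m:ℝ)*s < x) (hx2 : x ≤ ((m:ℝ)+1/2)*s)
    (hy1 : (n:ℝ)*s < y) (hy2 : y ≤ ((n:ℝ)+1/2)*s)
    (h : (x-y)^2 ≤ 1) : m - n ≤ 1 := by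
  by_contra hc
  push_neg at hc
  have h2 : (2:ℤ) ≤ m - n := by omega
  have h2' : (2:ℝ) ≤ (m:ℝ) - (n:ℝ) := by exact_mod_cast h2
  have hxy : x - y ≤ 1 := by nlinarith [sq_nonneg (x - y - 1)]
  nlinarith [hxy, h2', hs1, hs2]

lemma strip3 (a b c : ℝ)
    (ha : ∃ n : ℤ, (n:ℝ) * Real.sqrt 3 < a ∧ a ≤ ((n:ℝ) + 1/2) * Real.sqrt 3)
    (hb : ∃ n : ℤ, (n:ℝ) * Real.sqrt 3 < b ∧ b ≤ ((n:ℝ) + 1/2) * Real.sqrt 3)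
    (hc : ∃ n : ℤ, (n:ℝ) * Real.sqrt 3 < c ∧ c ≤ ((n:ℝ) + 1/2) * Real.sqrt 3)
    (hab : (a-b)^2 ≤ 1) (hbc : (b-c)^2 ≤ 1) (hca : (a-c)^2 ≤ 1)
    (hid : (a-b)^2 + (a-b)*(b-c) + (b-c)^2 = 3/4) : False := by
  obtain ⟨nA, ha1, ha2⟩ := ha
  obtain ⟨nB, hb1, hb2⟩ := hb
  obtain ⟨nC, hc1, hc2⟩ := hc
  have hs2 : (Real.sqrt 3)^2 = 3 := Real.sq_sqrt (by norm_num)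
  have hs0 : (0:ℝ) < Real.sqrt 3 := Real.sqrt_pos.mpr (by norm_num)
  have hs1 : (1:ℝ) < Real.sqrt 3 := by nlinarith
  have hba : (b-a)^2 ≤ 1 := by rw [show (b-a)^2 = (a-b)^2 by ring]; exact hab
  have hcb : (c-b)^2 ≤ 1 := by rw [show (c-b)^2 = (b-c)^2 by ring]; exact hbc
  have hca' : (c-a)^2 ≤ 1 := by rw [show (c-a)^2 = (a-c)^2 by ring]; exact hca
  have d1 : nA - nB ≤ 1 := stripdiff _ hs2 hs1 nA nB a b ha1 ha2 hb1 hb2 hab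
  have d1' : nB - nA ≤ 1 := stripdiff _ hs2 hs1 nB nA b a hb1 hb2 ha1 ha2 hba
  have d2 : nB - nC ≤ 1 := stripdiff _ hs2 hs1 nB nC b c hb1 hb2 hc1 hc2 hbc
  have d2' : nC - nB ≤ 1 := stripdiff _ hs2 hs1 nC nB c b hc1 hc2 hb1 hb2 hcb
  have d3 : nA - nC ≤ 1 := stripdiff _ hs2 hs1 nA nC a c ha1 ha2 hc1 hc2 hca
  have d3' : nC - nA ≤ 1 := stripdiff _ hs2 hs1 nC nA c a hc1 hc2 ha1 ha2 hca'
  have k1 : nA - nB = -1 ∨ nA - nB = 0 ∨ nA - nB = 1 := by omega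
  have k2 : nB - nC = -1 ∨ nB - nC = 0 ∨ nB - nC = 1 := by omega
  rcases k1 with e1 | e1 | e1 <;> rcases k2 with e2 | e2 | e2
  · omega
  · -- (-1,0): b-a, c-a big
    have g1 : 3/4 < (b - a)^2 := gap_lemma _ hs2 hs0 nB nA b a hb1 ha2 (by omega)
    have g2 : 3/4 < (c - a)^2 := gap_lemma _ hs2 hs0 nC nA c a hc1 ha2 (by omega)
    refine twobig2 (a-b) (b-c) hid ?_ ?_
    · rw [show (a-b)^2 = (b-a)^2 by ring]; exact g1
    · rw [show ((a-b)+(b-c))^2 = (c-a)^2 by ring]; exact g2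
  · -- (-1,1): b-a, b-c big
    have g1 : 3/4 < (b - a)^2 := gap_lemma _ hs2 hs0 nB nA b a hb1 ha2 (by omega)
    have g2 : 3/4 < (b - c)^2 := gap_lemma _ hs2 hs0 nB nC b c hb1 hc2 (by omega)
    refine twobig1 (a-b) (b-c) hid ?_ g2
    rw [show (a-b)^2 = (b-a)^2 by ring]; exact g1
  · -- (0,-1): c-b, c-a big
    have g1 : 3/4 < (c - b)^2 := gap_lemma _ hs2 hs0 nC nB c b hc1 hb2 (by omega)
    have g2 : 3/4 < (c - a)^2 := gap_lemma _ hs2 hs0 nC nA c a hc1 ha2 (by omega)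
    refine twobig3 (a-b) (b-c) hid ?_ ?_
    · rw [show (b-c)^2 = (c-b)^2 by ring]; exact g1
    · rw [show ((a-b)+(b-c))^2 = (c-a)^2 by ring]; exact g2
  · -- (0,0): all small
    have g1 : (a - b)^2 < 3/4 := small_lemma _ hs2 hs0 nA nB a b ha1 ha2 hb1 hb2 (by omega)
    have g2 : (b - c)^2 < 3/4 := small_lemma _ hs2 hs0 nB nC b c hb1 hb2 hc1 hc2 (by omega)
    have g3 : (a - c)^2 < 3/4 := small_lemma _ hs2 hs0 nA nC a c ha1 ha2 hc1 hc2 (by omega)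
    refine allsmall (a-b) (b-c) hid g1 g2 ?_
    rw [show ((a-b)+(b-c))^2 = (a-c)^2 by ring]; exact g3
  · -- (0,1): b-c, a-c big
    have g1 : 3/4 < (b - c)^2 := gap_lemma _ hs2 hs0 nB nC b c hb1 hc2 (by omega)
    have g2 : 3/4 < (a - c)^2 := gap_lemma _ hs2 hs0 nA nC a c ha1 hc2 (by omega)
    refine twobig3 (a-b) (b-c) hid g1 ?_
    rw [show ((a-b)+(b-c))^2 = (a-c)^2 by ring]; exact g2
  · -- (1,-1): a-b, c-b big
    have g1 : 3/4 < (a - b)^2 := gap_lemma _ hs2 hs0 nA nB a b ha1 hb2 (by omega)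
    have g2 : 3/4 < (c - b)^2 := gap_lemma _ hs2 hs0 nC nB c b hc1 hb2 (by omega)
    refine twobig1 (a-b) (b-c) hid g1 ?_
    rw [show (b-c)^2 = (c-b)^2 by ring]; exact g2
  · -- (1,0): a-b, a-c big
    have g1 : 3/4 < (a - b)^2 := gap_lemma _ hs2 hs0 nA nB a b ha1 hb2 (by omega)
    have g2 : 3/4 < (a - c)^2 := gap_lemma _ hs2 hs0 nA nC a c ha1 hc2 (by omega)
    refine twobig2 (a-b) (b-c) hid g1 ?_
    rw [show ((a-b)+(b-c))^2 = (a-c)^2 by ring]; exact g2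
  · omega

lemma triangle_id (p q u v : ℝ) (e1 : p^2 + u^2 = 1) (e2 : q^2 + v^2 = 1)
    (e3 : (p+q)^2 + (u+v)^2 = 1) : u^2 + u*v + v^2 = 3/4 := by
  have h4 : p*q + u*v = -1/2 := by linear_combination (e3 - e1 - e2)/2
  have h6 : (p*q)^2 = (1 - u^2) * (1 - v^2) := by
    linear_combination (q^2)*e1 + (1 - u^2)*e2
  linear_combination (u*v + 1/2 - p*q)*h4 + h6

lemma notB (y : ℝ)
    (h : ¬ ∃ n : ℤ, (n:ℝ) * Real.sqrt 3 < y ∧ y ≤ ((n:ℝ) + 1/2) * Real.sqrt 3) :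
    ∃ n : ℤ, (n:ℝ) * Real.sqrt 3 < y - Real.sqrt 3 / 2 ∧
      y - Real.sqrt 3 / 2 ≤ ((n:ℝ) + 1/2) * Real.sqrt 3 := by
  push_neg at h
  have hs0 : (0:ℝ) < Real.sqrt 3 := Real.sqrt_pos.mpr (by norm_num)
  have hsne : Real.sqrt 3 ≠ 0 := ne_of_gt hs0
  obtain ⟨n, hn⟩ : ∃ n : ℤ, n = ⌊y / Real.sqrt 3⌋ := ⟨_, rfl⟩
  have hfl1 : (n:ℝ) ≤ y / Real.sqrt 3 := hn ▸ Int.floor_le _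
  have hfl2 : y / Real.sqrt 3 < (n:ℝ) + 1 := hn ▸ Int.lt_floor_add_one _
  have hns : (n:ℝ) * Real.sqrt 3 ≤ y := by
    have := mul_le_mul_of_nonneg_right hfl1 hs0.le
    rwa [div_mul_cancel₀ _ hsne] at this
  have hns2 : y < ((n:ℝ) + 1) * Real.sqrt 3 := by
    have := mul_lt_mul_of_pos_right hfl2 hs0
    rwa [div_mul_cancel₀ _ hsne] at this
  by_cases hy : y ≤ ((n:ℝ) + 1/2) * Real.sqrt 3
  · have heq : y = (n:ℝ) * Real.sqrt 3 := by
      by_contra hne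
      have hlt := lt_of_le_of_ne hns (Ne.symm hne)
      linarith [h n hlt]
    refine ⟨n - 1, ?_, ?_⟩ <;> push_cast <;> nlinarith [hs0]
  · push_neg at hy
    exact ⟨n, by nlinarith [hs0], by nlinarith [hns2]⟩

/-- The union of the half-open horizontal strips `{(x,y) : n√3 < y ≤ (n + 1/2)√3}`, `n ∈ ℤ`. -/
def StripColoring : Set (EuclideanSpace ℝ (Fin 2)) :=
  {p | ∃ n : ℤ, (n : ℝ) * Real.sqrt 3 < p 1 ∧ p 1 ≤ ((n : ℝ) + 1 / 2) * Real.sqrt 3}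

theorem stmt8 :
    ¬∃ X Y Z : EuclideanSpace ℝ (Fin 2),
      ((X ∈ StripColoring ∧ Y ∈ StripColoring ∧ Z ∈ StripColoring) ∨
        (X ∉ StripColoring ∧ Y ∉ StripColoring ∧ Z ∉ StripColoring)) ∧
      dist X Y = 1 ∧ dist Y Z = 1 ∧ dist Z X = 1 := by
  rintro ⟨X, Y, Z, hcolor, hXY, hYZ, hZX⟩
  have dcoord : ∀ P Q : EuclideanSpace ℝ (Fin 2), dist P Q = 1 →
      (P 0 - Q 0)^2 + (P 1 - Q 1)^2 = 1 := by
    intro P Q h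
    rw [EuclideanSpace.dist_eq, Fin.sum_univ_two] at h
    have := Real.sqrt_eq_one.mp h
    simpa [Real.dist_eq, sq_abs] using this
  have e1 := dcoord X Y hXY
  have e2 := dcoord Y Z hYZ
  have e3 := dcoord Z X hZX
  have e3' : ((X 0 - Y 0) + (Y 0 - Z 0))^2 + ((X 1 - Y 1) + (Y 1 - Z 1))^2 = 1 := by
    linear_combination e3
  have hid : (X 1 - Y 1)^2 + (X 1 - Y 1)*(Y 1 - Z 1) + (Y 1 - Z 1)^2 = 3/4 :=
    triangle_id (X 0 - Y 0) (Y 0 - Z 0) (X 1 - Y 1) (Y 1 - Z 1) e1 e2 e3'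
  have hu2 : (X 1 - Y 1)^2 ≤ 1 := by nlinarith [e1, sq_nonneg (X 0 - Y 0)]
  have hv2 : (Y 1 - Z 1)^2 ≤ 1 := by nlinarith [e2, sq_nonneg (Y 0 - Z 0)]
  have hw2 : (X 1 - Z 1)^2 ≤ 1 := by nlinarith [e3, sq_nonneg (Z 0 - X 0)]
  rcases hcolor with ⟨hX, hY, hZ⟩ | ⟨hX, hY, hZ⟩
  · exact strip3 (X 1) (Y 1) (Z 1) hX hY hZ hu2 hv2 hw2 hid
  · refine strip3 (X 1 - Real.sqrt 3 / 2) (Y 1 - Real.sqrt 3 / 2) (Z 1 - Real.sqrt 3 / 2)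
      (notB (X 1) hX) (notB (Y 1) hY) (notB (Z 1) hZ) ?_ ?_ ?_ (by linear_combination hid)
    · rw [show (X 1 - Real.sqrt 3 / 2 - (Y 1 - Real.sqrt 3 / 2)) = X 1 - Y 1 by ring]; exact hu2
    · rw [show (Y 1 - Real.sqrt 3 / 2 - (Z 1 - Real.sqrt 3 / 2)) = Y 1 - Z 1 by ring]; exact hv2
    · rw [show (X 1 - Real.sqrt 3 / 2 - (Z 1 - Real.sqrt 3 / 2)) = X 1 - Z 1 by ring]; exact hw2
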